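/- arXiv:2011.13754 — 3 statements merged into one kernel-verified Lean document; each statement's English description precedes it below -/
import Mathlib

section
/- Let A be a graded-commutative ring (over ℤ) with a top class g, and suppose u, v, u', v' are homogeneous elements of odd degree with u·u' = v·v' = g and u·v' = v·u' = 0, where u,v have degree 1 and u',v' have degree m-1. Then in A ⊗ A (graded tensor product), the fourfold product (u⊗1-1⊗u)(u'⊗1-1⊗u')(v⊗1-1⊗v)(v'⊗1-1⊗v') equals 2(g ⊗ g). -/
/- STATEMENT 2: Let `A` be a graded-commutative ring (over `ℤ`) with a top class `g` in degree
`m`, and let `u, v, u', v'` be homogeneous elements of odd degree with `u·u' = v·v' = g` and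
`u·v' = v·u' = 0` (`u, v` of degree 1 and `u', v'` of degree `m-1`).  Then, in the graded tensor
product `A ⊗ A` (modelled as a ring `B` with embeddings `l a = a⊗1`, `r a = 1⊗a` and the Koszul
sign rule), the fourfold product
`(u⊗1-1⊗u)(u'⊗1-1⊗u')(v⊗1-1⊗v)(v'⊗1-1⊗v')` equals `2 (g ⊗ g)`. -/

theorem stmt2 (m : ℕ) (hm : 3 ≤ m) (hmodd : Odd (m - 1))
    (A : Type*) [Ring A] (u v u' v' g : A)
    -- Poincaré-duality pairing relations
    (huu' : u * u' = g) (hvv' : v * v' = g) (huv' : u * v' = 0) (hvu' : v * u' = 0)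
    -- products of total degree exceeding `m` vanish
    (hu'v' : u' * v' = 0)
    (hg : ∀ a ∈ ({u, v, u', v', g} : Set A), g * a = 0 ∧ a * g = 0)
    (B : Type*) [Ring B] (l r : A →+* B)
    -- Koszul sign rule: all of `u, v, u', v'` have odd degree
    (hc : ∀ a ∈ ({u, v, u', v'} : Set A), ∀ b ∈ ({u, v, u', v'} : Set A),
      r a * l b = -(l b * r a))
    -- `g` has even degree `m`, so it commutes across the tensor product
    (hcg : ∀ a : A, r g * l a = l a * r g ∧ r a * l g = l g * r a) :
    (l u - r u) * (l u' - r u') * (l v - r v) * (l v' - r v')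
      = 2 * (l g * r g) := by
  obtain ⟨hgu, hug⟩ := hg u (by simp)
  obtain ⟨hgv, hvg⟩ := hg v (by simp)
  obtain ⟨hgu', hu'g⟩ := hg u' (by simp)
  obtain ⟨hgv', hv'g⟩ := hg v' (by simp)
  have mu4 : u ∈ ({u, v, u', v'} : Set A) := by simp
  have mv4 : v ∈ ({u, v, u', v'} : Set A) := by simp
  have mu'4 : u' ∈ ({u, v, u', v'} : Set A) := by simp
  have mv'4 : v' ∈ ({u, v, u', v'} : Set A) := by simp
  -- base Koszul swaps
  have cuu' := hc u mu4 u' mu'4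
  have cuv := hc u mu4 v mv4
  have cuv' := hc u mu4 v' mv'4
  have cu'v := hc u' mu'4 v mv4
  have cu'v' := hc u' mu'4 v' mv'4
  have cvv' := hc v mv4 v' mv'4
  -- swaps with a tail
  have mk : ∀ {a b : A}, (r a * l b = -(l b * r a)) →
      ∀ x : B, r a * (l b * x) = -(l b * (r a * x)) := by
    intro a b h x
    rw [← mul_assoc, h, neg_mul, mul_assoc]
  have Cuu' := mk cuu'
  have Cuv := mk cuv
  have Cuv' := mk cuv'
  have Cu'v := mk cu'v
  have Cu'v' := mk cu'v'
  have Cvv' := mk cvv'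
  -- collapsing lemmas with tail
  have Lc : ∀ (a b : A) (x : B), l a * (l b * x) = l (a * b) * x := by
    intro a b x; rw [← mul_assoc, ← map_mul]
  have Rc : ∀ (a b : A) (x : B), r a * (r b * x) = r (a * b) * x := by
    intro a b x; rw [← mul_assoc, ← map_mul]
  -- A-level relations for longer words
  have huvv' : u * v * v' = 0 := by rw [mul_assoc, hvv', hug]
  have hu'vv' : u' * v * v' = 0 := by rw [mul_assoc, hvv', hu'g]
  have huu'v : u * u' * v = 0 := by rw [huu', hgv]
  have huu'v' : u * u' * v' = 0 := by rw [huu', hgv']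
  have huu'vv' : u * u' * v * v' = 0 := by rw [huu'v, zero_mul]
  have h1 : u * (u' * v) = 0 := by rw [← mul_assoc, huu', hgv]
  have h2 : u * (u' * v') = 0 := by rw [← mul_assoc, huu', hgv']
  have h3 : u * (v * v') = 0 := by rw [hvv', hug]
  have h4 : u' * (v * v') = 0 := by rw [hvv', hu'g]
  have h5 : u * (u' * (v * v')) = 0 := by rw [hvv', hu'g, mul_zero]
  have h6 : u * (u' * v * v') = 0 := by rw [← mul_assoc, ← mul_assoc, huu', hgv, zero_mul]
  -- expand everything
  simp only [sub_eq_add_neg, mul_add, add_mul, mul_neg, neg_mul, neg_neg, mul_assoc]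
  -- push all `r`s to the right of all `l`s
  simp only [Cuu', Cuv, Cuv', Cu'v, Cu'v', Cvv', cuu', cuv, cuv', cu'v, cu'v', cvv',
    mul_neg, neg_mul, neg_neg]
  -- collapse products under `l` and `r`
  simp only [Lc, Rc, ← map_mul]
  -- evaluate the A-level products
  simp only [huu'vv', huu'v, huu'v', huvv', hu'vv', huu', hvv', huv', hvu', hu'v',
    h1, h2, h3, h4, h5, h6, hgu, hgv, hgu', hgv', hug, hvg, hu'g, hv'g,
    map_zero, mul_zero, zero_mul, neg_zero, add_zero, zero_add, neg_neg]
  rw [two_mul]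
end

section
/- Let A = Λ(x_k, x_l) be the exterior ℤ-algebra on generators of odd degrees k and l with 1 < k ≤ l. Then every product of three elements of the zero-divisor ideal ker(μ: A⊗A → A) generated by x̂_k = x_k⊗1-1⊗x_k and x̂_l = x_l⊗1-1⊗x_l and ĝ = g⊗1-1⊗g (g = x_k x_l) vanishes, i.e., the nilpotency of the ideal generated by these zero-divisors is exactly 3; in particular x̂_k · x̂_l ≠ 0 while x̂_k · x̂_l · ẑ = 0 for every z ∈ {x_k, x_l, g}. -/
/- STATEMENT 7: Let `A = Λ(x_k, x_l)` be the exterior `ℤ`-algebra on generators of odd degrees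
`k` and `l` with `1 < k ≤ l`, and let `g = x_k x_l`.  Model the graded tensor product `A ⊗ A` as
a ring `B` with embeddings `lt a = a⊗1`, `rt a = 1⊗a` obeying the Koszul sign rule, with
multiplication map `μ(a⊗b) = a·b`.  Then every product of three elements of the zero-divisor
ideal `ker μ` (which is generated by `x̂_k`, `x̂_l` and `ĝ`) vanishes, i.e. the nilpotency of
this ideal is exactly 3: `x̂_k · x̂_l ≠ 0` while `x̂_k · x̂_l · ẑ = 0` for every
`z ∈ {x_k, x_l, g}`. -/

theorem stmt7 (k L : ℕ) (hk : Odd k) (hL : Odd L) (hkl : 1 < k ∧ k ≤ L)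
    (A : Type*) [Ring A] (xk xl : A)
    -- exterior algebra relations
    (hxk2 : xk * xk = 0) (hxl2 : xl * xl = 0) (hanti : xk * xl = -(xl * xk))
    -- `A` is free on the basis `1, x_k, x_l, g` with `g = x_k x_l` spanning the top degree
    (hspanA : ∀ a : A, ∃ c0 c1 c2 c3 : ℤ,
      a = c0 • (1 : A) + c1 • xk + c2 • xl + c3 • (xk * xl))
    (B : Type*) [Ring B] (lt rt : A →+* B)
    -- Koszul sign rule for the odd generators
    (hc : ∀ a ∈ ({xk, xl} : Set A), ∀ b ∈ ({xk, xl} : Set A),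
      rt a * lt b = -(lt b * rt a))
    -- `g = x_k x_l` has even degree, so it commutes across the tensor product
    (hcg : ∀ a : A, rt (xk * xl) * lt a = lt a * rt (xk * xl)
      ∧ rt a * lt (xk * xl) = lt (xk * xl) * rt a)
    -- `B` models `A ⊗ A`: it is spanned by the products `a⊗b` of basis elements, freely
    (hspanB : ∀ b : B, b ∈ Submodule.span ℤ
      (Set.range fun q : Fin 4 × Fin 4 =>
        lt (![1, xk, xl, xk * xl] q.1) * rt (![1, xk, xl, xk * xl] q.2)))
    (hindepB : LinearIndependent ℤ
      (fun q : Fin 4 × Fin 4 =>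
        lt (![1, xk, xl, xk * xl] q.1) * rt (![1, xk, xl, xk * xl] q.2)))
    -- the multiplication map μ : A ⊗ A → A
    (μ : B →+ A) (hμ : ∀ a b : A, μ (lt a * rt b) = a * b) :
    (∀ y z w : B, μ y = 0 → μ z = 0 → μ w = 0 → y * z * w = 0)
      ∧ (lt xk - rt xk) * (lt xl - rt xl) ≠ 0
      ∧ ∀ z ∈ ({xk, xl, xk * xl} : Set A),
          (lt xk - rt xk) * (lt xl - rt xl) * (lt z - rt z) = 0 := by
  have hanti' : xl * xk = -(xk * xl) := by rw [hanti, neg_neg]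
  have hgk : xk * (xk * xl) = 0 := by rw [← mul_assoc, hxk2, zero_mul]
  have hkg : (xk * xl) * xk = 0 := by
    rw [mul_assoc, hanti', mul_neg, ← mul_assoc, hxk2, zero_mul, neg_zero]
  have hlg : xl * (xk * xl) = 0 := by
    rw [← mul_assoc, hanti', neg_mul, mul_assoc, hxl2, mul_zero, neg_zero]
  have hgl : (xk * xl) * xl = 0 := by rw [mul_assoc, hxl2, mul_zero]
  have hgg : (xk * xl) * (xk * xl) = 0 := by rw [mul_assoc, hlg, mul_zero]
  have mk : xk ∈ ({xk, xl} : Set A) := Set.mem_insert _ _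
  have ml : xl ∈ ({xk, xl} : Set A) := Set.mem_insert_of_mem _ rfl
  have ckk : rt xk * lt xk = (-1 : ℤ) • (lt xk * rt xk) := by rw [hc xk mk xk mk]; simp
  have ckl : rt xk * lt xl = (-1 : ℤ) • (lt xl * rt xk) := by rw [hc xk mk xl ml]; simp
  have clk : rt xl * lt xk = (-1 : ℤ) • (lt xk * rt xl) := by rw [hc xl ml xk mk]; simp
  have cll : rt xl * lt xl = (-1 : ℤ) • (lt xl * rt xl) := by rw [hc xl ml xl ml]; simp
  have cgl : ∀ a : A, rt (xk * xl) * lt a = lt a * rt (xk * xl) := fun a => (hcg a).1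
  have crg : ∀ a : A, rt a * lt (xk * xl) = lt (xk * xl) * rt a := fun a => (hcg a).2
  set X := lt xk - rt xk with hX
  set Y := lt xl - rt xl with hY
  -- supercommutation lemmas
  have sXl1 : X * lt 1 = (1 : ℤ) • (lt 1 * X) := by simp
  have sXlk : X * lt xk = (-1 : ℤ) • (lt xk * X) := by
    simp only [hX, sub_mul, mul_sub, ← map_mul, hxk2, map_zero, ckk]; abel
  have sXll : X * lt xl = (-1 : ℤ) • (lt xl * X) := by
    simp only [hX, sub_mul, mul_sub, ← map_mul, hanti', map_neg, ckl]; abel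
  have sXlg : X * lt (xk * xl) = (1 : ℤ) • (lt (xk * xl) * X) := by
    simp only [hX, sub_mul, mul_sub, ← map_mul, hgk, hkg, map_zero, crg xk]; abel
  have sXr1 : X * rt 1 = (1 : ℤ) • (rt 1 * X) := by simp
  have sXrk : X * rt xk = (-1 : ℤ) • (rt xk * X) := by
    simp only [hX, sub_mul, mul_sub, ← map_mul, hxk2, map_zero, ckk]; abel
  have sXrl : X * rt xl = (-1 : ℤ) • (rt xl * X) := by
    simp only [hX, sub_mul, mul_sub, ← map_mul, hanti', map_neg, clk]; abel
  have sXrg : X * rt (xk * xl) = (1 : ℤ) • (rt (xk * xl) * X) := by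
    simp only [hX, sub_mul, mul_sub, ← map_mul, hgk, hkg, map_zero, cgl xk]; abel
  have sYl1 : Y * lt 1 = (1 : ℤ) • (lt 1 * Y) := by simp
  have sYlk : Y * lt xk = (-1 : ℤ) • (lt xk * Y) := by
    simp only [hY, sub_mul, mul_sub, ← map_mul, hanti', map_neg, clk]; abel
  have sYll : Y * lt xl = (-1 : ℤ) • (lt xl * Y) := by
    simp only [hY, sub_mul, mul_sub, ← map_mul, hxl2, map_zero, cll]; abel
  have sYlg : Y * lt (xk * xl) = (1 : ℤ) • (lt (xk * xl) * Y) := by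
    simp only [hY, sub_mul, mul_sub, ← map_mul, hlg, hgl, map_zero, crg xl]; abel
  have sYr1 : Y * rt 1 = (1 : ℤ) • (rt 1 * Y) := by simp
  have sYrk : Y * rt xk = (-1 : ℤ) • (rt xk * Y) := by
    simp only [hY, sub_mul, mul_sub, ← map_mul, hanti', map_neg, ckl]; abel
  have sYrl : Y * rt xl = (-1 : ℤ) • (rt xl * Y) := by
    simp only [hY, sub_mul, mul_sub, ← map_mul, hxl2, map_zero, cll]; abel
  have sYrg : Y * rt (xk * xl) = (1 : ℤ) • (rt (xk * xl) * Y) := by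
    simp only [hY, sub_mul, mul_sub, ← map_mul, hlg, hgl, map_zero, cgl xl]; abel
  have key : ∀ (P Q : B) (u v : A) (su sv : ℤ), P * lt u = su • (lt u * P) →
      P * rt v = sv • (rt v * P) → P * (lt u * rt v) * Q = (su * sv) • (lt u * (rt v * (P * Q))) := by
    intro P Q u v su sv hu hv
    calc P * (lt u * rt v) * Q = ((P * lt u) * rt v) * Q := by rw [mul_assoc P (lt u) (rt v)]
    _ = ((su • (lt u * P)) * rt v) * Q := by rw [hu]
    _ = su • ((lt u * (P * rt v)) * Q) := by
          rw [smul_mul_assoc, smul_mul_assoc, mul_assoc (lt u) P (rt v)]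
    _ = su • ((lt u * (sv • (rt v * P))) * Q) := by rw [hv]
    _ = (su * sv) • (lt u * (rt v * (P * Q))) := by
          rw [mul_smul_comm, smul_mul_assoc, smul_smul, mul_assoc (lt u), mul_assoc (rt v)]
  have hXX : X * X = 0 := by
    simp only [hX, sub_mul, mul_sub, ← map_mul, hxk2, map_zero, ckk]; abel
  have hYY : Y * Y = 0 := by
    simp only [hY, sub_mul, mul_sub, ← map_mul, hxl2, map_zero, cll]; abel
  have hXY : X * Y = -(Y * X) := by
    simp only [hX, hY, sub_mul, mul_sub, ← map_mul, ckl, clk, hanti', map_neg]; abel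
  have base3 : ∀ (u v : A) (su sv : ℤ), X * lt u = su • (lt u * X) → X * rt v = sv • (rt v * X) →
      Y * lt u = su • (lt u * Y) → Y * rt v = sv • (rt v * Y) →
      X * (lt u * rt v) * X = 0 ∧ Y * (lt u * rt v) * Y = 0 ∧
        X * (lt u * rt v) * Y = -(Y * (lt u * rt v) * X) := by
    intro u v su sv h1 h2 h3 h4
    refine ⟨?_, ?_, ?_⟩
    · rw [key X X u v su sv h1 h2, hXX]; simp
    · rw [key Y Y u v su sv h3 h4, hYY]; simp
    · rw [key X Y u v su sv h1 h2, key Y X u v su sv h3 h4, hXY]; simp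
  have Btriple : ∀ m : B, X * m * X = 0 ∧ Y * m * Y = 0 ∧ X * m * Y = -(Y * m * X) := by
    intro m
    refine Submodule.span_induction ?_ (by simp) ?_ ?_ (hspanB m)
    · rintro x ⟨⟨i, j⟩, rfl⟩
      fin_cases i <;> fin_cases j
      · exact base3 1 1 1 1 sXl1 sXr1 sYl1 sYr1
      · exact base3 1 xk 1 (-1) sXl1 sXrk sYl1 sYrk
      · exact base3 1 xl 1 (-1) sXl1 sXrl sYl1 sYrl
      · exact base3 1 (xk*xl) 1 1 sXl1 sXrg sYl1 sYrg
      · exact base3 xk 1 (-1) 1 sXlk sXr1 sYlk sYr1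
      · exact base3 xk xk (-1) (-1) sXlk sXrk sYlk sYrk
      · exact base3 xk xl (-1) (-1) sXlk sXrl sYlk sYrl
      · exact base3 xk (xk*xl) (-1) 1 sXlk sXrg sYlk sYrg
      · exact base3 xl 1 (-1) 1 sXll sXr1 sYll sYr1
      · exact base3 xl xk (-1) (-1) sXll sXrk sYll sYrk
      · exact base3 xl xl (-1) (-1) sXll sXrl sYll sYrl
      · exact base3 xl (xk*xl) (-1) 1 sXll sXrg sYll sYrg
      · exact base3 (xk*xl) 1 1 1 sXlg sXr1 sYlg sYr1
      · exact base3 (xk*xl) xk 1 (-1) sXlg sXrk sYlg sYrk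
      · exact base3 (xk*xl) xl 1 (-1) sXlg sXrl sYlg sYrl
      · exact base3 (xk*xl) (xk*xl) 1 1 sXlg sXrg sYlg sYrg
    · rintro x y - - ⟨h1, h2, h3⟩ ⟨h4, h5, h6⟩
      refine ⟨?_, ?_, ?_⟩ <;> simp only [mul_add, add_mul, h1, h2, h3, h4, h5, h6] <;> abel
    · rintro r x - ⟨h1, h2, h3⟩
      refine ⟨?_, ?_, ?_⟩ <;>
        simp only [mul_smul_comm, smul_mul_assoc, h1, h2, h3, smul_zero, smul_neg]
  have B1 : ∀ m : B, X * m * X = 0 := fun m => (Btriple m).1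
  have B2 : ∀ m : B, Y * m * Y = 0 := fun m => (Btriple m).2.1
  have B3 : ∀ m : B, X * m * Y = -(Y * m * X) := fun m => (Btriple m).2.2
  have B3' : ∀ m : B, Y * m * X = -(X * m * Y) := by intro m; rw [B3 m, neg_neg]
  have Tgen : ∀ (P Q R : B), (P = X ∨ P = Y) → (Q = X ∨ Q = Y) → (R = X ∨ R = Y) →
      ∀ a b c : B, a * P * (b * Q) * (c * R) = 0 := by
    intro P Q R hP hQ hR a b c
    rcases hP with rfl | rfl <;> rcases hQ with rfl | rfl
    · rw [mul_assoc a X (b * X), ← mul_assoc X b X, B1 b, mul_zero, zero_mul]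
    · -- X Y
      rcases hR with rfl | rfl
      · rw [mul_assoc a X (b * Y), ← mul_assoc X b Y, B3 b]
        simp only [mul_neg, neg_mul, neg_eq_zero]
        rw [← mul_assoc a (Y * b) X, mul_assoc (a * (Y * b)) X (c * X), ← mul_assoc X c X,
          B1 c]
        simp
      · rw [mul_assoc (a * X) (b * Y) (c * Y), mul_assoc b Y (c * Y), ← mul_assoc Y c Y,
          B2 c]
        simp
    · -- Y X
      rcases hR with rfl | rfl
      · rw [mul_assoc (a * Y) (b * X) (c * X), mul_assoc b X (c * X), ← mul_assoc X c X,
          B1 c]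
        simp
      · rw [mul_assoc a Y (b * X), ← mul_assoc Y b X, B3' b]
        simp only [mul_neg, neg_mul, neg_eq_zero]
        rw [← mul_assoc a (X * b) Y, mul_assoc (a * (X * b)) Y (c * Y), ← mul_assoc Y c Y,
          B2 c]
        simp
    · rw [mul_assoc a Y (b * Y), ← mul_assoc Y b Y, B2 b, mul_zero, zero_mul]
  -- normal-ordering helper lemmas
  have ltlt : ∀ (a b : A) (t : B), lt a * (lt b * t) = lt (a * b) * t := by
    intro a b t; rw [← mul_assoc, ← map_mul]
  have rtrt : ∀ (a b : A) (t : B), rt a * (rt b * t) = rt (a * b) * t := by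
    intro a b t; rw [← mul_assoc, ← map_mul]
  have ckk' : ∀ t : B, rt xk * (lt xk * t) = (-1 : ℤ) • (lt xk * (rt xk * t)) := by
    intro t; rw [← mul_assoc, ckk, smul_mul_assoc, mul_assoc]
  have ckl' : ∀ t : B, rt xk * (lt xl * t) = (-1 : ℤ) • (lt xl * (rt xk * t)) := by
    intro t; rw [← mul_assoc, ckl, smul_mul_assoc, mul_assoc]
  have clk' : ∀ t : B, rt xl * (lt xk * t) = (-1 : ℤ) • (lt xk * (rt xl * t)) := by
    intro t; rw [← mul_assoc, clk, smul_mul_assoc, mul_assoc]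
  have cll' : ∀ t : B, rt xl * (lt xl * t) = (-1 : ℤ) • (lt xl * (rt xl * t)) := by
    intro t; rw [← mul_assoc, cll, smul_mul_assoc, mul_assoc]
  have cgl' : ∀ (a : A) (t : B), rt (xk * xl) * (lt a * t) = lt a * (rt (xk * xl) * t) := by
    intro a t; rw [← mul_assoc, cgl, mul_assoc]
  have crg' : ∀ (a : A) (t : B), rt a * (lt (xk * xl) * t) = lt (xk * xl) * (rt a * t) := by
    intro a t; rw [← mul_assoc, crg, mul_assoc]
  -- μ kills right multiples of X and Y
  have keyμ : ∀ (u v w : A) (s : ℤ), rt v * lt w = s • (lt w * rt v) →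
      (lt u * rt v) * (lt w - rt w) = s • (lt (u * w) * rt v) - lt u * rt (v * w) := by
    intro u v w s hsw
    rw [mul_sub, mul_assoc (lt u) (rt v) (lt w), hsw, mul_smul_comm,
      ← mul_assoc (lt u) (lt w) (rt v), ← map_mul, mul_assoc (lt u) (rt v) (rt w), ← map_mul]
  have hbaseμ : ∀ (u v : A) (s t : ℤ), rt v * lt xk = s • (lt xk * rt v) →
      rt v * lt xl = t • (lt xl * rt v) → s • (xk * v) = v * xk → t • (xl * v) = v * xl →
      μ ((lt u * rt v) * X) = 0 ∧ μ ((lt u * rt v) * Y) = 0 := by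
    intro u v s t h1 h2 h3 h4
    constructor
    · rw [hX, keyμ u v xk s h1, map_sub, map_zsmul, hμ, hμ, mul_assoc, ← mul_smul_comm, h3,
        sub_self]
    · rw [hY, keyμ u v xl t h2, map_sub, map_zsmul, hμ, hμ, mul_assoc, ← mul_smul_comm, h4,
        sub_self]
  have hμK : ∀ m : B, μ (m * X) = 0 ∧ μ (m * Y) = 0 := by
    intro m
    refine Submodule.span_induction ?_ (by simp) ?_ ?_ (hspanB m)
    · rintro x ⟨⟨i, j⟩, rfl⟩
      fin_cases j
      · exact hbaseμ _ 1 1 1 (by simp) (by simp) (by simp) (by simp)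
      · exact hbaseμ _ xk (-1) (-1) ckk ckl (by rw [hxk2]; simp)
          (by rw [hanti']; simp)
      · exact hbaseμ _ xl (-1) (-1) clk cll (by rw [hanti']; simp)
          (by rw [hxl2]; simp)
      · exact hbaseμ _ (xk * xl) 1 1 (by simpa using cgl xk) (by simpa using cgl xl) (by rw [hgk, hkg]; simp)
          (by rw [hlg, hgl]; simp)
    · rintro x y - - ⟨h1, h2⟩ ⟨h3, h4⟩
      constructor <;> rw [add_mul, map_add] <;> simp [h1, h2, h3, h4]
    · rintro r x - ⟨h1, h2⟩
      constructor <;> rw [smul_mul_assoc, map_zsmul] <;> simp [h1, h2]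
  -- decomposition of B modulo the right ideal generated by X, Y
  have hK : ∀ m : B, ∃ a b : B, ∃ d0 d1 d2 d3 : ℤ,
      m = a * X + b * Y + d0 • (1 : B) + d1 • rt xk + d2 • rt xl + d3 • rt (xk * xl) := by
    intro m
    refine Submodule.span_induction ?_ ⟨0, 0, 0, 0, 0, 0, by simp⟩ ?_ ?_ (hspanB m)
    · rintro x ⟨⟨i, j⟩, rfl⟩
      fin_cases i <;> fin_cases j
      · exact ⟨0, 0, 1, 0, 0, 0, by simp only [Fin.zero_eta, Fin.mk_one, Fin.reduceFinMk, Matrix.cons_val_zero, Matrix.cons_val_one, Matrix.head_cons, Matrix.cons_val_two, Matrix.tail_cons, Matrix.cons_val_three, Nat.succ_eq_add_one, Nat.reduceAdd, hX, hY, sub_mul, mul_sub, add_mul, mul_add, neg_mul, mul_neg, mul_assoc, ltlt, rtrt, ckk', ckl', clk', cll', cgl', crg', ckk, ckl, clk, cll, cgl, crg, ← map_mul, hxk2, hxl2, hgk, hkg, hlg, hgl, hgg, hanti', map_neg, map_zero, map_one, one_mul, mul_one, zero_mul, mul_zero, smul_mul_assoc, mul_smul_comm, smul_smul, smul_neg,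 neg_smul, one_smul, zero_smul, smul_zero, neg_neg]; abel⟩
      · exact ⟨0, 0, 0, 1, 0, 0, by simp only [Fin.zero_eta, Fin.mk_one, Fin.reduceFinMk, Matrix.cons_val_zero, Matrix.cons_val_one, Matrix.head_cons, Matrix.cons_val_two, Matrix.tail_cons, Matrix.cons_val_three, Nat.succ_eq_add_one, Nat.reduceAdd, hX, hY, sub_mul, mul_sub, add_mul, mul_add, neg_mul, mul_neg, mul_assoc, ltlt, rtrt, ckk', ckl', clk', cll', cgl', crg', ckk, ckl, clk, cll, cgl, crg, ← map_mul, hxk2, hxl2, hgk, hkg, hlg, hgl, hgg, hanti', map_neg, map_zero, map_one, one_mul, mul_one, zero_mul, mul_zero, smul_mul_assoc, mul_smul_comm, smul_smul, smul_neg, neg_smul, one_smul, zero_smul, smul_zero, neg_neg]; abel⟩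
      · exact ⟨0, 0, 0, 0, 1, 0, by simp only [Fin.zero_eta, Fin.mk_one, Fin.reduceFinMk, Matrix.cons_val_zero, Matrix.cons_val_one, Matrix.head_cons, Matrix.cons_val_two, Matrix.tail_cons, Matrix.cons_val_three, Nat.succ_eq_add_one, Nat.reduceAdd, hX, hY, sub_mul, mul_sub, add_mul, mul_add, neg_mul, mul_neg, mul_assoc, ltlt, rtrt, ckk', ckl', clk', cll', cgl', crg', ckk, ckl, clk, cll, cgl, crg, ← map_mul, hxk2, hxl2, hgk, hkg, hlg, hgl, hgg, hanti', map_neg, map_zero, map_one, one_mul, mul_one, zero_mul, mul_zero, smul_mul_assoc, mul_smul_comm, smul_smul, smul_neg, neg_smul, one_smul, zero_smul, smul_zero, neg_neg]; abel⟩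
      · exact ⟨0, 0, 0, 0, 0, 1, by simp only [Fin.zero_eta, Fin.mk_one, Fin.reduceFinMk, Matrix.cons_val_zero, Matrix.cons_val_one, Matrix.head_cons, Matrix.cons_val_two, Matrix.tail_cons, Matrix.cons_val_three, Nat.succ_eq_add_one, Nat.reduceAdd, hX, hY, sub_mul, mul_sub, add_mul, mul_add, neg_mul, mul_neg, mul_assoc, ltlt, rtrt, ckk', ckl', clk', cll', cgl', crg', ckk, ckl, clk, cll, cgl, crg, ← map_mul, hxk2, hxl2, hgk, hkg, hlg, hgl, hgg, hanti', map_neg, map_zero, map_one, one_mul, mul_one, zero_mul, mul_zero, smul_mul_assoc, mul_smul_comm, smul_smul, smul_neg, neg_smul, one_smul, zero_smul, smul_zero, neg_neg]; abel⟩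
      · exact ⟨1, 0, 0, 1, 0, 0, by simp only [Fin.zero_eta, Fin.mk_one, Fin.reduceFinMk, Matrix.cons_val_zero, Matrix.cons_val_one, Matrix.head_cons, Matrix.cons_val_two, Matrix.tail_cons, Matrix.cons_val_three, Nat.succ_eq_add_one, Nat.reduceAdd, hX, hY, sub_mul, mul_sub, add_mul, mul_add, neg_mul, mul_neg, mul_assoc, ltlt, rtrt, ckk', ckl', clk', cll', cgl', crg', ckk, ckl, clk, cll, cgl, crg, ← map_mul, hxk2, hxl2, hgk, hkg, hlg, hgl, hgg, hanti', map_neg, map_zero, map_one, one_mul, mul_one, zero_mul, mul_zero, smul_mul_assoc, mul_smul_comm, smul_smul, smul_neg, neg_smul, one_smul, zero_smul, smul_zero, neg_neg]; abel⟩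
      · exact ⟨-(lt xk), 0, 0, 0, 0, 0, by simp only [Fin.zero_eta, Fin.mk_one, Fin.reduceFinMk, Matrix.cons_val_zero, Matrix.cons_val_one, Matrix.head_cons, Matrix.cons_val_two, Matrix.tail_cons, Matrix.cons_val_three, Nat.succ_eq_add_one, Nat.reduceAdd, hX, hY, sub_mul, mul_sub, add_mul, mul_add, neg_mul, mul_neg, mul_assoc, ltlt, rtrt, ckk', ckl', clk', cll', cgl', crg', ckk, ckl, clk, cll, cgl, crg, ← map_mul, hxk2, hxl2, hgk, hkg, hlg, hgl, hgg, hanti', map_neg, map_zero, map_one, one_mul, mul_one, zero_mul, mul_zero, smul_mul_assoc, mul_smul_comm, smul_smul, smul_neg, neg_smul, one_smul, zero_smul, smul_zero, neg_neg]; abel⟩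
      · exact ⟨-(rt xl), 0, 0, 0, 0, 1, by simp only [Fin.zero_eta, Fin.mk_one, Fin.reduceFinMk, Matrix.cons_val_zero, Matrix.cons_val_one, Matrix.head_cons, Matrix.cons_val_two, Matrix.tail_cons, Matrix.cons_val_three, Nat.succ_eq_add_one, Nat.reduceAdd, hX, hY, sub_mul, mul_sub, add_mul, mul_add, neg_mul, mul_neg, mul_assoc, ltlt, rtrt, ckk', ckl', clk', cll', cgl', crg', ckk, ckl, clk, cll, cgl, crg, ← map_mul, hxk2, hxl2, hgk, hkg, hlg, hgl, hgg, hanti', map_neg, map_zero, map_one, one_mul, mul_one, zero_mul, mul_zero, smul_mul_assoc, mul_smul_comm, smul_smul, smul_neg, neg_smul, one_smul, zero_smul, smul_zero, neg_neg]; abel⟩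
      · exact ⟨lt xk * rt xl, 0, 0, 0, 0, 0, by simp only [Fin.zero_eta, Fin.mk_one, Fin.reduceFinMk, Matrix.cons_val_zero, Matrix.cons_val_one, Matrix.head_cons, Matrix.cons_val_two, Matrix.tail_cons, Matrix.cons_val_three, Nat.succ_eq_add_one, Nat.reduceAdd, hX, hY, sub_mul, mul_sub, add_mul, mul_add, neg_mul, mul_neg, mul_assoc, ltlt, rtrt, ckk', ckl', clk', cll', cgl', crg', ckk, ckl, clk, cll, cgl, crg, ← map_mul, hxk2, hxl2, hgk, hkg, hlg, hgl, hgg, hanti', map_neg, map_zero, map_one, one_mul, mul_one, zero_mul, mul_zero, smul_mul_assoc, mul_smul_comm, smul_smul, smul_neg, neg_smul, one_smul, zero_smul, smul_zero, neg_neg]; abel⟩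
      · exact ⟨0, 1, 0, 0, 1, 0, by simp only [Fin.zero_eta, Fin.mk_one, Fin.reduceFinMk, Matrix.cons_val_zero, Matrix.cons_val_one, Matrix.head_cons, Matrix.cons_val_two, Matrix.tail_cons, Matrix.cons_val_three, Nat.succ_eq_add_one, Nat.reduceAdd, hX, hY, sub_mul, mul_sub, add_mul, mul_add, neg_mul, mul_neg, mul_assoc, ltlt, rtrt, ckk', ckl', clk', cll', cgl', crg', ckk, ckl, clk, cll, cgl, crg, ← map_mul, hxk2, hxl2, hgk, hkg, hlg, hgl, hgg, hanti', map_neg, map_zero, map_one, one_mul, mul_one, zero_mul, mul_zero, smul_mul_assoc, mul_smul_comm, smul_smul, smul_neg, neg_smul, one_smul, zero_smul, smul_zero, neg_neg]; abel⟩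
      · exact ⟨0, -(rt xk), 0, 0, 0, -1, by simp only [Fin.zero_eta, Fin.mk_one, Fin.reduceFinMk, Matrix.cons_val_zero, Matrix.cons_val_one, Matrix.head_cons, Matrix.cons_val_two, Matrix.tail_cons, Matrix.cons_val_three, Nat.succ_eq_add_one, Nat.reduceAdd, hX, hY, sub_mul, mul_sub, add_mul, mul_add, neg_mul, mul_neg, mul_assoc, ltlt, rtrt, ckk', ckl', clk', cll', cgl', crg', ckk, ckl, clk, cll, cgl, crg, ← map_mul, hxk2, hxl2, hgk, hkg, hlg, hgl, hgg, hanti', map_neg, map_zero, map_one, one_mul, mul_one, zero_mul, mul_zero, smul_mul_assoc, mul_smul_comm, smul_smul, smul_neg, neg_smul, one_smul, zero_smul, smul_zero, neg_neg]; abel⟩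
      · exact ⟨0, -(lt xl), 0, 0, 0, 0, by simp only [Fin.zero_eta, Fin.mk_one, Fin.reduceFinMk, Matrix.cons_val_zero, Matrix.cons_val_one, Matrix.head_cons, Matrix.cons_val_two, Matrix.tail_cons, Matrix.cons_val_three, Nat.succ_eq_add_one, Nat.reduceAdd, hX, hY, sub_mul, mul_sub, add_mul, mul_add, neg_mul, mul_neg, mul_assoc, ltlt, rtrt, ckk', ckl', clk', cll', cgl', crg', ckk, ckl, clk, cll, cgl, crg, ← map_mul, hxk2, hxl2, hgk, hkg, hlg, hgl, hgg, hanti', map_neg, map_zero, map_one, one_mul, mul_one, zero_mul, mul_zero, smul_mul_assoc, mul_smul_comm, smul_smul, smul_neg, neg_smul, one_smul, zero_smul, smul_zero, neg_neg]; abel⟩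
      · exact ⟨0, -(lt xl * rt xk), 0, 0, 0, 0, by simp only [Fin.zero_eta, Fin.mk_one, Fin.reduceFinMk, Matrix.cons_val_zero, Matrix.cons_val_one, Matrix.head_cons, Matrix.cons_val_two, Matrix.tail_cons, Matrix.cons_val_three, Nat.succ_eq_add_one, Nat.reduceAdd, hX, hY, sub_mul, mul_sub, add_mul, mul_add, neg_mul, mul_neg, mul_assoc, ltlt, rtrt, ckk', ckl', clk', cll', cgl', crg', ckk, ckl, clk, cll, cgl, crg, ← map_mul, hxk2, hxl2, hgk, hkg, hlg, hgl, hgg, hanti', map_neg, map_zero, map_one, one_mul, mul_one, zero_mul, mul_zero, smul_mul_assoc, mul_smul_comm, smul_smul, smul_neg, neg_smul, one_smul, zero_smul, smul_zero, neg_neg]; abel⟩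
      · exact ⟨-(lt xl), rt xk, 0, 0, 0, 1, by simp only [Fin.zero_eta, Fin.mk_one, Fin.reduceFinMk, Matrix.cons_val_zero, Matrix.cons_val_one, Matrix.head_cons, Matrix.cons_val_two, Matrix.tail_cons, Matrix.cons_val_three, Nat.succ_eq_add_one, Nat.reduceAdd, hX, hY, sub_mul, mul_sub, add_mul, mul_add, neg_mul, mul_neg, mul_assoc, ltlt, rtrt, ckk', ckl', clk', cll', cgl', crg', ckk, ckl, clk, cll, cgl, crg, ← map_mul, hxk2, hxl2, hgk, hkg, hlg, hgl, hgg, hanti', map_neg, map_zero, map_one, one_mul, mul_one, zero_mul, mul_zero, smul_mul_assoc, mul_smul_comm, smul_smul, smul_neg, neg_smul, one_smul, zero_smul, smul_zero, neg_neg]; abel⟩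
      · exact ⟨-(lt (xk * xl)), 0, 0, 0, 0, 0, by simp only [Fin.zero_eta, Fin.mk_one, Fin.reduceFinMk, Matrix.cons_val_zero, Matrix.cons_val_one, Matrix.head_cons, Matrix.cons_val_two, Matrix.tail_cons, Matrix.cons_val_three, Nat.succ_eq_add_one, Nat.reduceAdd, hX, hY, sub_mul, mul_sub, add_mul, mul_add, neg_mul, mul_neg, mul_assoc, ltlt, rtrt, ckk', ckl', clk', cll', cgl', crg', ckk, ckl, clk, cll, cgl, crg, ← map_mul, hxk2, hxl2, hgk, hkg, hlg, hgl, hgg, hanti', map_neg, map_zero, map_one, one_mul, mul_one, zero_mul, mul_zero, smul_mul_assoc, mul_smul_comm, smul_smul, smul_neg, neg_smul, one_smul, zero_smul, smul_zero, neg_neg]; abel⟩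
      · exact ⟨0, -(lt (xk * xl)), 0, 0, 0, 0, by simp only [Fin.zero_eta, Fin.mk_one, Fin.reduceFinMk, Matrix.cons_val_zero, Matrix.cons_val_one, Matrix.head_cons, Matrix.cons_val_two, Matrix.tail_cons, Matrix.cons_val_three, Nat.succ_eq_add_one, Nat.reduceAdd, hX, hY, sub_mul, mul_sub, add_mul, mul_add, neg_mul, mul_neg, mul_assoc, ltlt, rtrt, ckk', ckl', clk', cll', cgl', crg', ckk, ckl, clk, cll, cgl, crg, ← map_mul, hxk2, hxl2, hgk, hkg, hlg, hgl, hgg, hanti', map_neg, map_zero, map_one, one_mul, mul_one, zero_mul, mul_zero, smul_mul_assoc, mul_smul_comm, smul_smul, smul_neg, neg_smul, one_smul, zero_smul, smul_zero, neg_neg]; abel⟩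
      · exact ⟨lt (xk * xl) * rt xl, 0, 0, 0, 0, 0, by simp only [Fin.zero_eta, Fin.mk_one, Fin.reduceFinMk, Matrix.cons_val_zero, Matrix.cons_val_one, Matrix.head_cons, Matrix.cons_val_two, Matrix.tail_cons, Matrix.cons_val_three, Nat.succ_eq_add_one, Nat.reduceAdd, hX, hY, sub_mul, mul_sub, add_mul, mul_add, neg_mul, mul_neg, mul_assoc, ltlt, rtrt, ckk', ckl', clk', cll', cgl', crg', ckk, ckl, clk, cll, cgl, crg, ← map_mul, hxk2, hxl2, hgk, hkg, hlg, hgl, hgg, hanti', map_neg, map_zero, map_one, one_mul, mul_one, zero_mul, mul_zero, smul_mul_assoc, mul_smul_comm, smul_smul, smul_neg, neg_smul, one_smul, zero_smul, smul_zero, neg_neg]; abel⟩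
    · rintro x y - - ⟨a, b, d0, d1, d2, d3, rfl⟩ ⟨a', b', e0, e1, e2, e3, rfl⟩
      exact ⟨a + a', b + b', d0 + e0, d1 + e1, d2 + e2, d3 + e3, by
        simp only [add_mul, add_smul]; abel⟩
    · rintro r x - ⟨a, b, d0, d1, d2, d3, rfl⟩
      exact ⟨r • a, r • b, r * d0, r * d1, r * d2, r * d3, by
        simp only [smul_add, smul_smul, smul_mul_assoc]⟩
  -- linear independence of the basis of A
  have hcomp : LinearIndependent ℤ (fun i : Fin 4 => lt (![1, xk, xl, xk * xl] i)) := by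
    have h := hindepB.comp (fun i : Fin 4 => ((i, (0 : Fin 4)) : Fin 4 × Fin 4))
      (fun a b hab => by simpa using congrArg Prod.fst hab)
    simpa [Function.comp_def] using h
  have indepA : LinearIndependent ℤ ![(1 : A), xk, xl, xk * xl] := by
    refine LinearIndependent.of_comp lt.toAddMonoidHom.toIntLinearMap ?_
    exact hcomp
  have hμ1 : μ 1 = 1 := by simpa using hμ 1 1
  have hμrk : μ (rt xk) = xk := by simpa using hμ 1 xk
  have hμrl : μ (rt xl) = xl := by simpa using hμ 1 xl
  have hμrg : μ (rt (xk * xl)) = xk * xl := by simpa using hμ 1 (xk * xl)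
  have kerdec : ∀ m : B, μ m = 0 → ∃ a b : B, m = a * X + b * Y := by
    intro m hm
    obtain ⟨a, b, d0, d1, d2, d3, hmeq⟩ := hK m
    rw [hmeq] at hm
    simp only [map_add, map_zsmul, (hμK a).1, (hμK b).2, hμ1, hμrk, hμrl, hμrg, zero_add] at hm
    have h4 := Fintype.linearIndependent_iff.mp indepA ![d0, d1, d2, d3] (by
      rw [Fin.sum_univ_four]; simpa using hm)
    have e0 : d0 = 0 := by simpa using h4 0
    have e1 : d1 = 0 := by simpa using h4 1
    have e2 : d2 = 0 := by simpa using h4 2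
    have e3 : d3 = 0 := by simpa using h4 3
    refine ⟨a, b, ?_⟩
    rw [hmeq, e0, e1, e2, e3]; simp
  refine ⟨?_, ?_, ?_⟩
  · intro y z w hy hz hw
    obtain ⟨a1, b1, rfl⟩ := kerdec y hy
    obtain ⟨a2, b2, rfl⟩ := kerdec z hz
    obtain ⟨a3, b3, rfl⟩ := kerdec w hw
    simp only [add_mul, mul_add,
      Tgen X X X (Or.inl rfl) (Or.inl rfl) (Or.inl rfl),
      Tgen X X Y (Or.inl rfl) (Or.inl rfl) (Or.inr rfl),
      Tgen X Y X (Or.inl rfl) (Or.inr rfl) (Or.inl rfl),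
      Tgen X Y Y (Or.inl rfl) (Or.inr rfl) (Or.inr rfl),
      Tgen Y X X (Or.inr rfl) (Or.inl rfl) (Or.inl rfl),
      Tgen Y X Y (Or.inr rfl) (Or.inl rfl) (Or.inr rfl),
      Tgen Y Y X (Or.inr rfl) (Or.inr rfl) (Or.inl rfl),
      Tgen Y Y Y (Or.inr rfl) (Or.inr rfl) (Or.inr rfl), add_zero, zero_add]
  · intro hcon
    have hXYval : X * Y = lt (xk * xl) + rt (xk * xl) + lt xl * rt xk - lt xk * rt xl := by
      simp only [hX, hY, sub_mul, mul_sub, ← map_mul, ckl, hanti', map_neg]; abel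
    have hzero : lt (xk * xl) + rt (xk * xl) + lt xl * rt xk - lt xk * rt xl = 0 := by
      rw [← hXYval]; exact hcon
    have h4 := hindepB.comp ![((3:Fin 4),(0:Fin 4)), (0,3), (1,2), (2,1)] (by decide)
    have hs := Fintype.linearIndependent_iff.mp h4 ![1, 1, -1, 1] (by
      rw [Fin.sum_univ_four]
      simp only [Matrix.cons_val_zero, Matrix.cons_val_one, Matrix.head_cons, Matrix.cons_val_two,
        Matrix.tail_cons, Matrix.cons_val_three, Function.comp_apply, one_smul, neg_smul,
        map_one, one_mul, mul_one]
      rw [← hzero]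
      abel)
    have := hs 2
    exact absurd this (by decide)
  · intro z hz
    simp only [Set.mem_insert_iff, Set.mem_singleton_iff] at hz
    have hG : lt (xk * xl) - rt (xk * xl) = -(lt xl) * X + rt xk * Y := by
      simp only [hX, hY, mul_sub, neg_mul, sub_mul, ← map_mul, ckl, hanti', map_neg]; abel
    rcases hz with rfl | rfl | rfl
    · rw [← hX]; exact B1 Y
    · rw [← hY, mul_assoc, hYY, mul_zero]
    · rw [hG]
      have t1 : X * Y * (-(lt xl) * X) = 0 := by
        simpa using Tgen X Y X (Or.inl rfl) (Or.inr rfl) (Or.inl rfl) 1 1 (-(lt xl))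
      have t2 : X * Y * (rt xk * Y) = 0 := by
        simpa using Tgen X Y Y (Or.inl rfl) (Or.inr rfl) (Or.inr rfl) 1 1 (rt xk)
      rw [mul_add, t1, t2, add_zero]
end

section
/- Let k, l be odd positive integers and A = Λ(x_k) ⊗ Λ(x_l) the graded tensor product of exterior algebras (modeling H*(S^k × S^l; ℤ)). Then the nilpotency of the zero-divisor ideal ker(μ: A⊗A → A) is exactly 3: the product (x_k⊗1-1⊗x_k)(x_l⊗1-1⊗x_l) is nonzero in A⊗A, but every product of three elements of ker μ vanishes. -/
/- STATEMENT 13: Let `k, l` be odd positive integers and `A = Λ(x_k) ⊗ Λ(x_l) ≅ Λ(x_k, x_l)`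
(modelling `H*(S^k × S^l;ℤ)`).  Model the graded tensor product `A ⊗ A` as a ring `B` with
embeddings `lt a = a⊗1`, `rt a = 1⊗a` obeying the Koszul sign rule, and multiplication map
`μ(a⊗b) = a·b`.  Then the nilpotency of the zero-divisor ideal `ker μ` is exactly 3: the
product `(x_k⊗1-1⊗x_k)(x_l⊗1-1⊗x_l)` is a nonzero product of two elements of `ker μ`, but
every product of three elements of `ker μ` vanishes. -/

set_option maxHeartbeats 1000000 in
theorem stmt13 (k L : ℕ) (hk : Odd k) (hL : Odd L) (hk0 : 0 < k) (hL0 : 0 < L)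
    (A : Type*) [Ring A] (xk xl : A)
    -- relations of `Λ(x_k, x_l)`
    (hxk2 : xk * xk = 0) (hxl2 : xl * xl = 0) (hanti : xk * xl = -(xl * xk))
    -- `A` is free on the basis `1, x_k, x_l, x_k x_l`
    (hspanA : ∀ a : A, ∃ c0 c1 c2 c3 : ℤ,
      a = c0 • (1 : A) + c1 • xk + c2 • xl + c3 • (xk * xl))
    (hindepA : LinearIndependent ℤ ![(1 : A), xk, xl, xk * xl])
    (B : Type*) [Ring B] (lt rt : A →+* B)
    -- Koszul sign rule for the odd-degree generators
    (hc : ∀ a ∈ ({xk, xl} : Set A), ∀ b ∈ ({xk, xl} : Set A),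
      rt a * lt b = -(lt b * rt a))
    (hcg : ∀ a : A, rt (xk * xl) * lt a = lt a * rt (xk * xl)
      ∧ rt a * lt (xk * xl) = lt (xk * xl) * rt a)
    -- `B` models `A ⊗ A`: spanned freely by products of basis elements
    (hspanB : ∀ b : B, b ∈ Submodule.span ℤ
      (Set.range fun q : Fin 4 × Fin 4 =>
        lt (![1, xk, xl, xk * xl] q.1) * rt (![1, xk, xl, xk * xl] q.2)))
    (hindepB : LinearIndependent ℤ
      (fun q : Fin 4 × Fin 4 =>
        lt (![1, xk, xl, xk * xl] q.1) * rt (![1, xk, xl, xk * xl] q.2)))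
    -- the multiplication map `μ : A ⊗ A → A`
    (μ : B →+ A) (hμ : ∀ a b : A, μ (lt a * rt b) = a * b) :
    (lt xk - rt xk) * (lt xl - rt xl) ≠ 0
      ∧ μ (lt xk - rt xk) = 0 ∧ μ (lt xl - rt xl) = 0
      ∧ ∀ y z w : B, μ y = 0 → μ z = 0 → μ w = 0 → y * z * w = 0 := by
  -- facts in `A`
  have hanti' : xl * xk = -(xk * xl) := by rw [hanti, neg_neg]
  have ham : xk * (xk * xl) = 0 := by rw [← mul_assoc, hxk2, zero_mul]
  have hma : (xk * xl) * xk = 0 := by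
    rw [mul_assoc, hanti', mul_neg, ← mul_assoc, hxk2, zero_mul, neg_zero]
  have hbm : xl * (xk * xl) = 0 := by
    rw [← mul_assoc, hanti', neg_mul, mul_assoc, hxl2, mul_zero, neg_zero]
  have hmb : (xk * xl) * xl = 0 := by rw [mul_assoc, hxl2, mul_zero]
  have hmm : (xk * xl) * (xk * xl) = 0 := by rw [← mul_assoc, hma, zero_mul]
  -- sign rules in `B`
  have memk : xk ∈ ({xk, xl} : Set A) := Set.mem_insert _ _
  have meml : xl ∈ ({xk, xl} : Set A) := Set.mem_insert_of_mem _ rfl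
  have cAA := hc xk memk xk memk
  have cAB := hc xk memk xl meml
  have cBA := hc xl meml xk memk
  have cBB := hc xl meml xl meml
  have cAA' : ∀ x : B, rt xk * (lt xk * x) = -(lt xk * (rt xk * x)) := fun x => by
    rw [← mul_assoc, cAA, neg_mul, mul_assoc]
  have cAB' : ∀ x : B, rt xk * (lt xl * x) = -(lt xl * (rt xk * x)) := fun x => by
    rw [← mul_assoc, cAB, neg_mul, mul_assoc]
  have cBA' : ∀ x : B, rt xl * (lt xk * x) = -(lt xk * (rt xl * x)) := fun x => by
    rw [← mul_assoc, cBA, neg_mul, mul_assoc]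
  have cBB' : ∀ x : B, rt xl * (lt xl * x) = -(lt xl * (rt xl * x)) := fun x => by
    rw [← mul_assoc, cBB, neg_mul, mul_assoc]
  have cMx : ∀ u, rt (xk*xl) * lt u = lt u * rt (xk*xl) := fun u => (hcg u).1
  have cxM : ∀ u, rt u * lt (xk*xl) = lt (xk*xl) * rt u := fun u => (hcg u).2
  have cMx' : ∀ u (x : B), rt (xk*xl) * (lt u * x) = lt u * (rt (xk*xl) * x) := fun u x => by
    rw [← mul_assoc, cMx, mul_assoc]
  have cxM' : ∀ u (x : B), rt u * (lt (xk*xl) * x) = lt (xk*xl) * (rt u * x) := fun u x => by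
    rw [← mul_assoc, cxM, mul_assoc]
  have LL : ∀ u v : A, lt u * lt v = lt (u*v) := fun u v => (map_mul lt u v).symm
  have RR : ∀ u v : A, rt u * rt v = rt (u*v) := fun u v => (map_mul rt u v).symm
  have LL' : ∀ (u v : A) (x : B), lt u * (lt v * x) = lt (u*v) * x := fun u v x => by
    rw [← mul_assoc, LL]
  have RR' : ∀ (u v : A) (x : B), rt u * (rt v * x) = rt (u*v) * x := fun u v x => by
    rw [← mul_assoc, RR]
  -- the three basic zero divisors
  set d : Fin 3 → B := ![lt xk - rt xk, lt xl - rt xl, lt (xk*xl) - rt (xk*xl)] with hd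
  have hd0 : d 0 = lt xk - rt xk := rfl
  have hd1 : d 1 = lt xl - rt xl := rfl
  have hd2 : d 2 = lt (xk*xl) - rt (xk*xl) := rfl
  -- pairwise relations
  have Q1 : d 0 * d 0 = 0 := by
    rw [hd0]
    simp only [sub_mul, mul_sub, add_mul, mul_add, mul_assoc, cAA, cAB, cBA, cBB,
        cAA', cAB', cBA', cBB', cMx, cxM, cMx', cxM', LL, RR, LL', RR',
        hxk2, hxl2, hanti', ham, hma, hbm, hmb, hmm,
        map_zero, map_neg, map_one, map_add, map_sub, map_zsmul,
        smul_mul_assoc, mul_smul_comm, smul_zero, smul_neg, smul_add, smul_sub, smul_smul, neg_one_mul, mul_neg_one, neg_smul,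
        mul_neg, neg_mul, neg_neg, one_mul, mul_one,
        zero_mul, mul_zero, neg_zero, sub_zero, zero_sub, add_zero, zero_add, sub_self,
        sub_neg_eq_add]
    all_goals abel
  have Q2 : d 1 * d 1 = 0 := by
    rw [hd1]
    simp only [sub_mul, mul_sub, add_mul, mul_add, mul_assoc, cAA, cAB, cBA, cBB,
        cAA', cAB', cBA', cBB', cMx, cxM, cMx', cxM', LL, RR, LL', RR',
        hxk2, hxl2, hanti', ham, hma, hbm, hmb, hmm,
        map_zero, map_neg, map_one, map_add, map_sub, map_zsmul,
        smul_mul_assoc, mul_smul_comm, smul_zero, smul_neg, smul_add, smul_sub, smul_smul, neg_one_mul, mul_neg_one, neg_smul,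
        mul_neg, neg_mul, neg_neg, one_mul, mul_one,
        zero_mul, mul_zero, neg_zero, sub_zero, zero_sub, add_zero, zero_add, sub_self,
        sub_neg_eq_add]
    all_goals abel
  have Q3 : d 1 * d 0 = -(d 0 * d 1) := by
    rw [hd0, hd1]
    simp only [sub_mul, mul_sub, add_mul, mul_add, mul_assoc, cAA, cAB, cBA, cBB,
        cAA', cAB', cBA', cBB', cMx, cxM, cMx', cxM', LL, RR, LL', RR',
        hxk2, hxl2, hanti', ham, hma, hbm, hmb, hmm,
        map_zero, map_neg, map_one, map_add, map_sub, map_zsmul,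
        smul_mul_assoc, mul_smul_comm, smul_zero, smul_neg, smul_add, smul_sub, smul_smul, neg_one_mul, mul_neg_one, neg_smul,
        mul_neg, neg_mul, neg_neg, one_mul, mul_one,
        zero_mul, mul_zero, neg_zero, sub_zero, zero_sub, add_zero, zero_add, sub_self,
        sub_neg_eq_add]
    all_goals abel
  have Q4 : d 2 * d 0 = d 0 * d 2 := by
    rw [hd0, hd2]
    simp only [sub_mul, mul_sub, add_mul, mul_add, mul_assoc, cAA, cAB, cBA, cBB,
        cAA', cAB', cBA', cBB', cMx, cxM, cMx', cxM', LL, RR, LL', RR',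
        hxk2, hxl2, hanti', ham, hma, hbm, hmb, hmm,
        map_zero, map_neg, map_one, map_add, map_sub, map_zsmul,
        smul_mul_assoc, mul_smul_comm, smul_zero, smul_neg, smul_add, smul_sub, smul_smul, neg_one_mul, mul_neg_one, neg_smul,
        mul_neg, neg_mul, neg_neg, one_mul, mul_one,
        zero_mul, mul_zero, neg_zero, sub_zero, zero_sub, add_zero, zero_add, sub_self,
        sub_neg_eq_add]
    all_goals abel
  have Q5 : d 2 * d 1 = d 1 * d 2 := by
    rw [hd1, hd2]
    simp only [sub_mul, mul_sub, add_mul, mul_add, mul_assoc, cAA, cAB, cBA, cBB,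
        cAA', cAB', cBA', cBB', cMx, cxM, cMx', cxM', LL, RR, LL', RR',
        hxk2, hxl2, hanti', ham, hma, hbm, hmb, hmm,
        map_zero, map_neg, map_one, map_add, map_sub, map_zsmul,
        smul_mul_assoc, mul_smul_comm, smul_zero, smul_neg, smul_add, smul_sub, smul_smul, neg_one_mul, mul_neg_one, neg_smul,
        mul_neg, neg_mul, neg_neg, one_mul, mul_one,
        zero_mul, mul_zero, neg_zero, sub_zero, zero_sub, add_zero, zero_add, sub_self,
        sub_neg_eq_add]
    all_goals abel
  have T1 : d 0 * (d 1 * d 2) = 0 := by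
    rw [hd0, hd1, hd2]
    simp only [sub_mul, mul_sub, add_mul, mul_add, mul_assoc, cAA, cAB, cBA, cBB,
        cAA', cAB', cBA', cBB', cMx, cxM, cMx', cxM', LL, RR, LL', RR',
        hxk2, hxl2, hanti', ham, hma, hbm, hmb, hmm,
        map_zero, map_neg, map_one, map_add, map_sub, map_zsmul,
        smul_mul_assoc, mul_smul_comm, smul_zero, smul_neg, smul_add, smul_sub, smul_smul, neg_one_mul, mul_neg_one, neg_smul,
        mul_neg, neg_mul, neg_neg, one_mul, mul_one,
        zero_mul, mul_zero, neg_zero, sub_zero, zero_sub, add_zero, zero_add, sub_self,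
        sub_neg_eq_add]
    all_goals abel
  have T2 : d 0 * (d 2 * d 2) = 0 := by
    rw [hd0, hd2]
    simp only [sub_mul, mul_sub, add_mul, mul_add, mul_assoc, cAA, cAB, cBA, cBB,
        cAA', cAB', cBA', cBB', cMx, cxM, cMx', cxM', LL, RR, LL', RR',
        hxk2, hxl2, hanti', ham, hma, hbm, hmb, hmm,
        map_zero, map_neg, map_one, map_add, map_sub, map_zsmul,
        smul_mul_assoc, mul_smul_comm, smul_zero, smul_neg, smul_add, smul_sub, smul_smul, neg_one_mul, mul_neg_one, neg_smul,
        mul_neg, neg_mul, neg_neg, one_mul, mul_one,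
        zero_mul, mul_zero, neg_zero, sub_zero, zero_sub, add_zero, zero_add, sub_self,
        sub_neg_eq_add]
    all_goals abel
  have T3 : d 1 * (d 2 * d 2) = 0 := by
    rw [hd1, hd2]
    simp only [sub_mul, mul_sub, add_mul, mul_add, mul_assoc, cAA, cAB, cBA, cBB,
        cAA', cAB', cBA', cBB', cMx, cxM, cMx', cxM', LL, RR, LL', RR',
        hxk2, hxl2, hanti', ham, hma, hbm, hmb, hmm,
        map_zero, map_neg, map_one, map_add, map_sub, map_zsmul,
        smul_mul_assoc, mul_smul_comm, smul_zero, smul_neg, smul_add, smul_sub, smul_smul, neg_one_mul, mul_neg_one, neg_smul,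
        mul_neg, neg_mul, neg_neg, one_mul, mul_one,
        zero_mul, mul_zero, neg_zero, sub_zero, zero_sub, add_zero, zero_add, sub_self,
        sub_neg_eq_add]
    all_goals abel
  have T4 : d 2 * (d 2 * d 2) = 0 := by
    rw [hd2]
    simp only [sub_mul, mul_sub, add_mul, mul_add, mul_assoc, cAA, cAB, cBA, cBB,
        cAA', cAB', cBA', cBB', cMx, cxM, cMx', cxM', LL, RR, LL', RR',
        hxk2, hxl2, hanti', ham, hma, hbm, hmb, hmm,
        map_zero, map_neg, map_one, map_add, map_sub, map_zsmul,
        smul_mul_assoc, mul_smul_comm, smul_zero, smul_neg, smul_add, smul_sub, smul_smul, neg_one_mul, mul_neg_one, neg_smul,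
        mul_neg, neg_mul, neg_neg, one_mul, mul_one,
        zero_mul, mul_zero, neg_zero, sub_zero, zero_sub, add_zero, zero_add, sub_self,
        sub_neg_eq_add]
    all_goals abel
  have Q1' : ∀ x : B, d 0 * (d 0 * x) = 0 := fun x => by
    rw [← mul_assoc, Q1, zero_mul]
  have Q2' : ∀ x : B, d 1 * (d 1 * x) = 0 := fun x => by
    rw [← mul_assoc, Q2, zero_mul]
  have Q3' : ∀ x : B, d 1 * (d 0 * x) = -(d 0 * (d 1 * x)) := fun x => by
    rw [← mul_assoc, Q3, neg_mul, mul_assoc]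
  have Q4' : ∀ x : B, d 2 * (d 0 * x) = d 0 * (d 2 * x) := fun x => by
    rw [← mul_assoc, Q4, mul_assoc]
  have Q5' : ∀ x : B, d 2 * (d 1 * x) = d 1 * (d 2 * x) := fun x => by
    rw [← mul_assoc, Q5, mul_assoc]
  have dtriple : ∀ i j k : Fin 3, d i * d j * d k = 0 := by
    intro i j k
    fin_cases i <;> fin_cases j <;> fin_cases k <;>
      simp only [Fin.zero_eta, Fin.mk_one, Fin.reduceFinMk, mul_assoc,
        Q3, Q4, Q5, Q3', Q4', Q5', Q1, Q2, Q1', Q2', T1, T2, T3, T4,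
        mul_neg, neg_mul, neg_neg, neg_zero, mul_zero, zero_mul]
  -- commutation of the `d`'s with left embeddings
  have hcomm : ∀ (j : Fin 3) (u : A), ∃ w : A, d j * lt u = lt w * d j := by
    intro j u
    obtain ⟨c0, c1, c2, c3, rfl⟩ := hspanA u
    fin_cases j
    · refine ⟨c0 • 1 - c1 • xk - c2 • xl + c3 • (xk*xl), ?_⟩
      show (lt xk - rt xk) * _ = _ * (lt xk - rt xk)
      simp only [sub_mul, mul_sub, add_mul, mul_add, mul_assoc, cAA, cAB, cBA, cBB,
        cAA', cAB', cBA', cBB', cMx, cxM, cMx', cxM', LL, RR, LL', RR',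
        hxk2, hxl2, hanti', ham, hma, hbm, hmb, hmm,
        map_zero, map_neg, map_one, map_add, map_sub, map_zsmul,
        smul_mul_assoc, mul_smul_comm, smul_zero, smul_neg, smul_add, smul_sub, smul_smul, neg_one_mul, mul_neg_one, neg_smul,
        mul_neg, neg_mul, neg_neg, one_mul, mul_one,
        zero_mul, mul_zero, neg_zero, sub_zero, zero_sub, add_zero, zero_add, sub_self,
        sub_neg_eq_add]
      all_goals abel
    · refine ⟨c0 • 1 - c1 • xk - c2 • xl + c3 • (xk*xl), ?_⟩
      show (lt xl - rt xl) * _ = _ * (lt xl - rt xl)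
      simp only [sub_mul, mul_sub, add_mul, mul_add, mul_assoc, cAA, cAB, cBA, cBB,
        cAA', cAB', cBA', cBB', cMx, cxM, cMx', cxM', LL, RR, LL', RR',
        hxk2, hxl2, hanti', ham, hma, hbm, hmb, hmm,
        map_zero, map_neg, map_one, map_add, map_sub, map_zsmul,
        smul_mul_assoc, mul_smul_comm, smul_zero, smul_neg, smul_add, smul_sub, smul_smul, neg_one_mul, mul_neg_one, neg_smul,
        mul_neg, neg_mul, neg_neg, one_mul, mul_one,
        zero_mul, mul_zero, neg_zero, sub_zero, zero_sub, add_zero, zero_add, sub_self,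
        sub_neg_eq_add]
      all_goals abel
    · refine ⟨c0 • 1 + c1 • xk + c2 • xl + c3 • (xk*xl), ?_⟩
      show (lt (xk*xl) - rt (xk*xl)) * _ = _ * (lt (xk*xl) - rt (xk*xl))
      simp only [sub_mul, mul_sub, add_mul, mul_add, mul_assoc, cAA, cAB, cBA, cBB,
        cAA', cAB', cBA', cBB', cMx, cxM, cMx', cxM', LL, RR, LL', RR',
        hxk2, hxl2, hanti', ham, hma, hbm, hmb, hmm,
        map_zero, map_neg, map_one, map_add, map_sub, map_zsmul,
        smul_mul_assoc, mul_smul_comm, smul_zero, smul_neg, smul_add, smul_sub, smul_smul, neg_one_mul, mul_neg_one, neg_smul,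
        mul_neg, neg_mul, neg_neg, one_mul, mul_one,
        zero_mul, mul_zero, neg_zero, sub_zero, zero_sub, add_zero, zero_add, sub_self,
        sub_neg_eq_add]
      all_goals abel
  -- Part 1 : the product of the two basic zero divisors is nonzero
  have hprod : (lt xk - rt xk) * (lt xl - rt xl)
      = lt (xk*xl) + rt (xk*xl) - lt xk * rt xl + lt xl * rt xk := by
    simp only [sub_mul, mul_sub, add_mul, mul_add, mul_assoc, cAA, cAB, cBA, cBB,
        cAA', cAB', cBA', cBB', cMx, cxM, cMx', cxM', LL, RR, LL', RR',
        hxk2, hxl2, hanti', ham, hma, hbm, hmb, hmm,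
        map_zero, map_neg, map_one, map_add, map_sub, map_zsmul,
        smul_mul_assoc, mul_smul_comm, smul_zero, smul_neg, smul_add, smul_sub, smul_smul, neg_one_mul, mul_neg_one, neg_smul,
        mul_neg, neg_mul, neg_neg, one_mul, mul_one,
        zero_mul, mul_zero, neg_zero, sub_zero, zero_sub, add_zero, zero_add, sub_self,
        sub_neg_eq_add]
    all_goals abel
  have hne : (lt xk - rt xk) * (lt xl - rt xl) ≠ 0 := by
    intro h0
    rw [hprod] at h0
    have hf : Function.Injective
        (fun i : Fin 4 => ((![3,1,2,0] : Fin 4 → Fin 4) i, (![0,2,1,3] : Fin 4 → Fin 4) i)) := by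
      decide
    have h4 := hindepB.comp _ hf
    have hsum : ∑ i : Fin 4, (![1,-1,1,1] : Fin 4 → ℤ) i •
        ((fun q : Fin 4 × Fin 4 =>
          lt (![1, xk, xl, xk * xl] q.1) * rt (![1, xk, xl, xk * xl] q.2)) ∘
          (fun i : Fin 4 => ((![3,1,2,0] : Fin 4 → Fin 4) i, (![0,2,1,3] : Fin 4 → Fin 4) i))) i
        = 0 := by
      rw [Fin.sum_univ_four]
      simp only [Function.comp_apply, Matrix.cons_val_zero, Matrix.cons_val_one,
        Matrix.head_cons, Matrix.cons_val_two, Matrix.tail_cons, Matrix.cons_val_three,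
        Matrix.head_fin_const, map_one, mul_one, one_mul, one_smul, neg_smul]
      rw [← h0]; abel
    have := Fintype.linearIndependent_iff.mp h4 _ hsum 0
    simp at this
  -- Parts 2 and 3 : the two elements lie in `ker μ`
  have hμa : μ (lt xk - rt xk) = 0 := by
    have h1 : lt xk - rt xk = lt xk * rt 1 - lt 1 * rt xk := by
      rw [map_one, map_one, mul_one, one_mul]
    rw [h1, map_sub, hμ, hμ, mul_one, one_mul, sub_self]
  have hμb : μ (lt xl - rt xl) = 0 := by
    have h1 : lt xl - rt xl = lt xl * rt 1 - lt 1 * rt xl := by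
      rw [map_one, map_one, mul_one, one_mul]
    rw [h1, map_sub, hμ, hμ, mul_one, one_mul, sub_self]
  -- Part 4 : products of three kernel elements vanish
  set g : A × Fin 3 → B := fun p => lt p.1 * d p.2 with hg
  set J : Submodule ℤ B := Submodule.span ℤ (Set.range g) with hJ
  have hgen : ∀ p : A × Fin 3, g p ∈ J := fun p =>
    Submodule.subset_span ⟨p, rfl⟩
  -- every kernel element lies in `J`
  have hker : ∀ y : B, μ y = 0 → y ∈ J := by
    have main : ∀ y : B, y ∈ Submodule.span ℤ
        (Set.range fun q : Fin 4 × Fin 4 =>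
          lt (![1, xk, xl, xk * xl] q.1) * rt (![1, xk, xl, xk * xl] q.2)) →
        y - lt (μ y) ∈ J := by
      intro y hy
      induction hy using Submodule.span_induction with
      | mem x hx =>
          obtain ⟨⟨i, j⟩, rfl⟩ := hx
          simp only
          rw [hμ]
          fin_cases j <;>
            simp only [Fin.isValue, Fin.zero_eta, Fin.mk_one, Fin.reduceFinMk,
              Matrix.cons_val_zero, Matrix.cons_val_one, Matrix.head_cons,
              Matrix.cons_val_two, Matrix.tail_cons, Matrix.cons_val_three,
              Matrix.head_fin_const, map_one, mul_one]
          · rw [sub_self]; exact J.zero_mem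
          · have : lt (![1, xk, xl, xk * xl] i) * rt xk
                - lt (![1, xk, xl, xk * xl] i * xk)
                = -(g (![1, xk, xl, xk * xl] i, 0)) := by
              simp only [hg, hd0, mul_sub, LL, neg_sub]
            rw [this]; exact J.neg_mem (hgen _)
          · have : lt (![1, xk, xl, xk * xl] i) * rt xl
                - lt (![1, xk, xl, xk * xl] i * xl)
                = -(g (![1, xk, xl, xk * xl] i, 1)) := by
              simp only [hg, hd1, mul_sub, LL, neg_sub]
            rw [this]; exact J.neg_mem (hgen _)
          · have : lt (![1, xk, xl, xk * xl] i) * rt (xk * xl)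
                - lt (![1, xk, xl, xk * xl] i * (xk * xl))
                = -(g (![1, xk, xl, xk * xl] i, 2)) := by
              simp only [hg, hd2, mul_sub, LL, neg_sub]
            rw [this]; exact J.neg_mem (hgen _)
      | zero => simp only [map_zero, sub_zero]; exact J.zero_mem
      | add x y hx hy ihx ihy =>
          have h : x + y - lt (μ (x + y)) = (x - lt (μ x)) + (y - lt (μ y)) := by
            rw [map_add, map_add]; abel
          rw [h]; exact J.add_mem ihx ihy
      | smul a x hx ih =>
          have h : a • x - lt (μ (a • x)) = a • (x - lt (μ x)) := by
            rw [map_zsmul, map_zsmul, smul_sub]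
          rw [h]; exact J.smul_mem a ih
    intro y hy
    have := main y (hspanB y)
    rwa [hy, map_zero, sub_zero] at this
  -- products of three generators vanish
  have key : ∀ p1 p2 p3 : A × Fin 3, g p1 * g p2 * g p3 = 0 := by
    rintro ⟨u1, i⟩ ⟨u2, j⟩ ⟨u3, k⟩
    obtain ⟨w2, hw2⟩ := hcomm i u2
    obtain ⟨w3, hw3⟩ := hcomm j u3
    obtain ⟨w3', hw3'⟩ := hcomm i w3
    show (lt u1 * d i) * (lt u2 * d j) * (lt u3 * d k) = 0
    calc (lt u1 * d i) * (lt u2 * d j) * (lt u3 * d k)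
        = lt u1 * ((d i * lt u2) * ((d j * lt u3) * d k)) := by
          simp only [mul_assoc]
      _ = lt u1 * ((lt w2 * (d i * lt w3)) * (d j * d k)) := by
          rw [hw2, hw3]; simp only [mul_assoc]
      _ = (lt u1 * (lt w2 * lt w3')) * (d i * (d j * d k)) := by
          rw [hw3']; simp only [mul_assoc]
      _ = 0 := by rw [← mul_assoc (d i) (d j) (d k), dtriple, mul_zero]
  -- bootstrapping over the span, three times
  have L1 : ∀ (p1 p2 : A × Fin 3), ∀ w ∈ J, g p1 * g p2 * w = 0 := by
    intro p1 p2 w hw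
    have hle : J ≤ LinearMap.ker (LinearMap.mulLeft ℤ (g p1 * g p2)) := by
      rw [hJ, Submodule.span_le]
      rintro x ⟨p3, rfl⟩
      simp only [SetLike.mem_coe, LinearMap.mem_ker, LinearMap.mulLeft_apply]
      exact key p1 p2 p3
    simpa [mul_assoc] using hle hw
  have L2 : ∀ (p1 : A × Fin 3), ∀ z ∈ J, ∀ w ∈ J, g p1 * z * w = 0 := by
    intro p1 z hz w hw
    have hle : J ≤ LinearMap.ker
        ((LinearMap.mulRight ℤ w).comp (LinearMap.mulLeft ℤ (g p1))) := by
      rw [hJ, Submodule.span_le]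
      rintro x ⟨p2, rfl⟩
      simp only [SetLike.mem_coe, LinearMap.mem_ker, LinearMap.comp_apply,
        LinearMap.mulLeft_apply, LinearMap.mulRight_apply]
      exact L1 p1 p2 w hw
    simpa using hle hz
  have L3 : ∀ y ∈ J, ∀ z ∈ J, ∀ w ∈ J, y * z * w = 0 := by
    intro y hy z hz w hw
    have hle : J ≤ LinearMap.ker
        ((LinearMap.mulRight ℤ w).comp (LinearMap.mulRight ℤ z)) := by
      rw [hJ, Submodule.span_le]
      rintro x ⟨p1, rfl⟩
      simp only [SetLike.mem_coe, LinearMap.mem_ker, LinearMap.comp_apply,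
        LinearMap.mulRight_apply]
      exact L2 p1 z hz w hw
    simpa using hle hy
  exact ⟨hne, hμa, hμb, fun y z w hy hz hw =>
    L3 y (hker y hy) z (hker z hz) w (hker w hw)⟩
end
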